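/- arXiv:2112.09487 — 3 statements merged into one kernel-verified Lean document; each statement's English description precedes it below -/
import Mathlib

section
/- Let k_p, k_o > 0 and r > 0 be constants, and let p_r ∈ ℝ³ be a fixed point. Suppose p_c : [0,∞) → ℝ³ is differentiable and satisfies the closed-loop ODE p_c'(t) = k_p · max(0, ‖p_r − p_c(t)‖² − r²) · (p_r − p_c(t)) for all t ≥ 0, and suppose θ : [0,∞) → ℝ is differentiable and satisfies θ'(t) = −k_o · θ(t). Then ‖p_r − p_c(t)‖² converges, as t → ∞, to min(‖p_r − p_c(0)‖², r²), and θ(t) = θ(0)·e^{−k_o t}, so θ(t) → 0 as t → ∞. (Proposition 1: the region-reaching and centering control objectives are achieved asymptotically.) -/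
open Filter Set

private theorem aux_scalar (k_p r : ℝ) (hkp : 0 < k_p) (hr : 0 < r) (V : ℝ → ℝ)
    (hV0 : ∀ t, 0 ≤ V t)
    (hV' : ∀ t, 0 ≤ t → HasDerivAt V (-(2 * (k_p * max 0 (V t - r ^ 2))) * V t) t) :
    Tendsto V atTop (nhds (min (V 0) (r ^ 2))) := by
  have hcont : ContinuousOn V (Ici 0) := fun x hx =>
    ((hV' x hx).continuousAt).continuousWithinAt
  have hanti : AntitoneOn V (Ici 0) := by
    apply antitoneOn_of_deriv_nonpos (convex_Ici 0) hcont
    · intro x hx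
      rw [interior_Ici] at hx
      exact (hV' x hx.le).differentiableAt.differentiableWithinAt
    · intro x hx
      rw [interior_Ici] at hx
      rw [(hV' x hx.le).deriv]
      have h1 : 0 ≤ 2 * (k_p * max 0 (V x - r ^ 2)) := by positivity
      have := mul_nonneg h1 (hV0 x)
      linarith
  -- if V t₁ ≤ r² then V constant afterwards
  have hconst : ∀ t₁, 0 ≤ t₁ → V t₁ ≤ r ^ 2 → ∀ t, t₁ ≤ t → V t = V t₁ := by
    intro t₁ ht₁ hle t ht
    have key : ∀ x ∈ Icc t₁ t, V x = V t₁ := by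
      apply constant_of_has_deriv_right_zero
      · exact hcont.mono ((Icc_subset_Ici_iff ht).mpr ht₁)
      · intro x hx
        have hx0 : 0 ≤ x := le_trans ht₁ hx.1
        have hVx : V x ≤ r ^ 2 :=
          le_trans (hanti ht₁ hx0 hx.1) hle
        have hmax : max 0 (V x - r ^ 2) = 0 := max_eq_left (by linarith)
        have := (hV' x hx0).hasDerivWithinAt (s := Ici x)
        rw [hmax] at this
        simpa using this
    exact key t ⟨ht, le_refl t⟩
  rcases le_or_gt (V 0) (r ^ 2) with h0 | h0
  · rw [min_eq_left h0]
    have : (fun _ : ℝ => V 0) =ᶠ[atTop] V := by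
      filter_upwards [eventually_ge_atTop (0 : ℝ)] with t ht
      exact (hconst 0 le_rfl h0 t ht).symm
    exact tendsto_const_nhds.congr' this
  · rw [min_eq_right h0.le]
    set W : ℝ → ℝ := fun t => V (max t 0) with hW
    have hWanti : Antitone W := fun s t hst =>
      hanti (le_max_right s 0) (le_max_right t 0) (max_le_max hst le_rfl)
    have hbdd : BddBelow (range W) := ⟨0, by rintro _ ⟨t, rfl⟩; exact hV0 _⟩
    have hWL : Tendsto W atTop (nhds (⨅ t, W t)) := tendsto_atTop_ciInf hWanti hbdd
    set L := ⨅ t, W t with hLdef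
    have hWV : W =ᶠ[atTop] V := by
      filter_upwards [eventually_ge_atTop (0 : ℝ)] with t ht
      simp [hW, max_eq_left ht]
    have hVL : Tendsto V atTop (nhds L) := hWL.congr' hWV
    have hLle : ∀ t, 0 ≤ t → L ≤ V t := by
      intro t ht
      have h := ciInf_le hbdd t
      simp only [hW] at h
      rw [max_eq_left ht] at h
      exact h
    have hL : L = r ^ 2 := by
      rcases lt_trichotomy L (r ^ 2) with hlt | heq | hgt
      · exfalso
        have hev : ∀ᶠ t in atTop, V t < r ^ 2 := hVL.eventually (eventually_lt_nhds hlt)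
        obtain ⟨t₀, ht₀0, ht₀⟩ :=
          ((eventually_ge_atTop (0 : ℝ)).and hev).exists
        have hcont' : ContinuousOn V (Icc 0 t₀) := hcont.mono (Icc_subset_Ici_self)
        have hmem : r ^ 2 ∈ Icc (V t₀) (V 0) := ⟨ht₀.le, h0.le⟩
        obtain ⟨t₁, ht₁mem, ht₁⟩ := intermediate_value_Icc' ht₀0 hcont' hmem
        have := hconst t₁ ht₁mem.1 ht₁.le t₀ ht₁mem.2
        rw [ht₁] at this
        linarith
      · exact heq
      · exfalso
        set c := 2 * (k_p * (L - r ^ 2)) * L with hc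
        have hc0 : 0 < c := by
          have hL0 : 0 < L := lt_trans (by positivity) hgt
          have : 0 < L - r ^ 2 := by linarith
          positivity
        have hUanti : AntitoneOn (fun t => V t + c * t) (Ici 0) := by
          apply antitoneOn_of_deriv_nonpos (convex_Ici 0)
          · exact hcont.add (continuous_const.mul continuous_id).continuousOn
          · intro x hx
            rw [interior_Ici] at hx
            exact (((hV' x hx.le).add ((hasDerivAt_id' x).const_mul c)).differentiableAt).differentiableWithinAt
          · intro x hx
            rw [interior_Ici] at hx
            have hd := (hV' x hx.le).add ((hasDerivAt_id' x).const_mul c)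
            have hd' : HasDerivAt (fun t => V t + c * t) (-(2 * (k_p * max 0 (V x - r ^ 2))) * V x + c * 1) x := hd
            rw [hd'.deriv]
            have hVx : L ≤ V x := hLle x hx.le
            have hmax : max 0 (V x - r ^ 2) = V x - r ^ 2 :=
              max_eq_right (by linarith)
            rw [hmax]
            have h1 : 2 * (k_p * (L - r ^ 2)) ≤ 2 * (k_p * (V x - r ^ 2)) := by nlinarith
            have h2 : 2 * (k_p * (L - r ^ 2)) * L ≤ 2 * (k_p * (V x - r ^ 2)) * V x := by
              apply mul_le_mul h1 hVx (le_trans (by positivity) hgt.le ) (by nlinarith)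
            linarith
        set T := max 0 (V 0 / c) + 1 with hT
        have hT0 : 0 ≤ T := by positivity
        have := hUanti (self_mem_Ici) hT0 hT0
        have hVT : V T + c * T ≤ V 0 + c * 0 := this
        have hTbig : V 0 < c * T := by
          have h1 : V 0 / c ≤ max 0 (V 0 / c) := le_max_right _ _
          have h2 : V 0 ≤ max 0 (V 0 / c) * c := (div_le_iff₀ hc0).mp h1
          rw [hT]
          nlinarith
        have := hV0 T
        linarith
    rw [← hL]
    exact hVL

/-- Proposition 1 (region reaching & centering): under the closed-loop dynamics
`p_c' = k_p · max(0, ‖p_r − p_c‖² − r²) · (p_r − p_c)` and `θ' = −k_o θ`, the squared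
distance `‖p_r − p_c(t)‖²` converges to `min(‖p_r − p_c(0)‖², r²)` and
`θ(t) = θ(0) e^{−k_o t} → 0`. -/
theorem prop1_region_reaching_and_centering
    (k_p k_o r : ℝ) (hkp : 0 < k_p) (hko : 0 < k_o) (hr : 0 < r)
    (p_r : EuclideanSpace ℝ (Fin 3)) (p_c : ℝ → EuclideanSpace ℝ (Fin 3)) (θ : ℝ → ℝ)
    (hpc : ∀ t, 0 ≤ t →
      HasDerivAt p_c ((k_p * max 0 (‖p_r - p_c t‖ ^ 2 - r ^ 2)) • (p_r - p_c t)) t)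
    (hθ : ∀ t, 0 ≤ t → HasDerivAt θ (-(k_o * θ t)) t) :
    Filter.Tendsto (fun t => ‖p_r - p_c t‖ ^ 2) Filter.atTop
      (nhds (min (‖p_r - p_c 0‖ ^ 2) (r ^ 2))) ∧
    (∀ t, 0 ≤ t → θ t = θ 0 * Real.exp (-k_o * t)) ∧
    Filter.Tendsto θ Filter.atTop (nhds 0) := by
  set V : ℝ → ℝ := fun t => ‖p_r - p_c t‖ ^ 2 with hVdef
  have hV' : ∀ t, 0 ≤ t → HasDerivAt V (-(2 * (k_p * max 0 (V t - r ^ 2))) * V t) t := by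
    intro t ht
    set c := k_p * max 0 (‖p_r - p_c t‖ ^ 2 - r ^ 2) with hc
    have hf : HasDerivAt (fun s => p_r - p_c s) (-(c • (p_r - p_c t))) t := by
      have := (hasDerivAt_const t p_r).sub (hpc t ht)
      rw [zero_sub] at this
      exact this
    have h2 := (hf.inner ℝ hf)
    have heq : (fun s => (inner ℝ (p_r - p_c s) (p_r - p_c s) : ℝ)) = V := by
      funext s; rw [real_inner_self_eq_norm_sq]
    rw [heq] at h2
    refine h2.congr_deriv ?_
    simp only [inner_neg_right, inner_neg_left, real_inner_smul_right, real_inner_smul_left,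
      real_inner_self_eq_norm_sq]
    ring
  have hVtend := aux_scalar k_p r hkp hr V (fun t => by positivity) hV'
  have hθform : ∀ t, 0 ≤ t → θ t = θ 0 * Real.exp (-k_o * t) := by
    intro t ht
    have key : ∀ x ∈ Icc 0 t, θ x * Real.exp (k_o * x) = θ 0 * Real.exp (k_o * 0) := by
      apply constant_of_has_deriv_right_zero
      · intro x hx
        exact (((hθ x hx.1).continuousAt).mul
          ((Real.continuous_exp.comp (continuous_const.mul continuous_id)).continuousAt)).continuousWithinAt
      · intro x hx
        have hd : HasDerivAt (fun x => θ x * Real.exp (k_o * x))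
            (-(k_o * θ x) * Real.exp (k_o * x) + θ x * (Real.exp (k_o * x) * k_o)) x := by
          exact (hθ x hx.1).mul (((Real.hasDerivAt_exp (k_o * x)).comp x
            ((hasDerivAt_id' x).const_mul k_o)).congr_deriv (by ring))
        have hd0 : HasDerivAt (fun x => θ x * Real.exp (k_o * x)) 0 x := by
          convert hd using 1; ring
        exact hd0.hasDerivWithinAt
    have h1 := key t ⟨le_refl 0 |>.trans ht, le_refl t⟩
    rw [mul_zero, Real.exp_zero, mul_one] at h1
    have hexp : Real.exp (k_o * t) ≠ 0 := Real.exp_ne_zero _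
    rw [neg_mul, Real.exp_neg]
    field_simp
    linarith [h1]
  refine ⟨hVtend, hθform, ?_⟩
  have h1 : Tendsto (fun t : ℝ => k_o * t) atTop atTop := tendsto_id.const_mul_atTop hko
  have h2 : Tendsto (fun t : ℝ => -k_o * t) atTop atBot := by
    have := tendsto_neg_atTop_atBot.comp h1
    refine this.congr fun t => ?_
    simp [Function.comp, neg_mul]
  have h3 : Tendsto (fun t : ℝ => θ 0 * Real.exp (-k_o * t)) atTop (nhds 0) := by
    simpa using tendsto_const_nhds.mul (Real.tendsto_exp_atBot.comp h2)
  apply h3.congr'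
  filter_upwards [eventually_ge_atTop (0 : ℝ)] with t ht
  exact (hθform t ht).symm
end

section
/- Let k_p, k_o > 0 and r > 0, and define f(x) := ‖x‖² − r² for x ∈ ℝ³. Suppose e : ℝ → ℝ³ is differentiable with e'(t) = −k_p · max(0, f(e(t))) • e(t), and θ : ℝ → ℝ is differentiable with θ'(t) = −k_o · θ(t). Then the Lyapunov-like function W(t) := (1/4)·max(0, f(e(t)))² + (1/2)·θ(t)² is differentiable with W'(t) = −k_p · max(0, f(e(t)))² · ‖e(t)‖² − k_o · θ(t)² for all t. -/
open Filter Topology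

lemma hasDerivAt_max_sq (y : ℝ) :
    HasDerivAt (fun x : ℝ => max 0 x ^ 2) (2 * max 0 y) y := by
  rcases lt_trichotomy y 0 with hy | hy | hy
  · have h0 : (2 : ℝ) * max 0 y = 0 := by rw [max_eq_left hy.le]; ring
    rw [h0]
    refine (hasDerivAt_const y (0:ℝ)).congr_of_eventuallyEq ?_
    filter_upwards [Iio_mem_nhds hy] with x hx
    simp [max_eq_left (le_of_lt (Set.mem_Iio.mp hx))]
  · subst hy
    rw [hasDerivAt_iff_isLittleO]
    simp only [max_self, mul_zero, smul_zero, sub_zero]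
    rw [Asymptotics.isLittleO_iff]
    intro c hc
    filter_upwards [Metric.ball_mem_nhds (0:ℝ) hc] with x hx
    have hx' : |x| < c := by simpa [Real.dist_eq] using hx
    have h1 : |max 0 x ^ 2 - max 0 0 ^ 2| ≤ |x| * |x| := by
      simp only [max_self, ne_eq, pow_two, sub_zero, mul_zero]
      rw [abs_mul]
      have : |max 0 x| ≤ |x| := by
        rcases le_total 0 x with h | h
        · simp [max_eq_right h]
        · simp [max_eq_left h, abs_nonneg]
      exact mul_le_mul this this (abs_nonneg _) (abs_nonneg _)
    refine le_trans ?_ (le_trans h1 (by nlinarith [abs_nonneg x] : |x| * |x| ≤ c * |x|))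
    simp [Real.norm_eq_abs]
  · have h0 : (2 : ℝ) * max 0 y = 2 * y := by rw [max_eq_right hy.le]
    rw [h0]
    have : HasDerivAt (fun x : ℝ => x ^ 2) (2 * y) y := by
      simpa using (hasDerivAt_pow 2 y)
    refine this.congr_of_eventuallyEq ?_
    filter_upwards [Ioi_mem_nhds hy] with x hx
    simp [max_eq_right (le_of_lt (Set.mem_Ioi.mp hx))]

/-- Equations (23)–(24): along the closed-loop dynamics `e' = −k_p max(0, f(e)) e` and
`θ' = −k_o θ`, with `f(x) = ‖x‖² − r²`, the Lyapunov-like function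
`W = (1/4) max(0, f(e))² + (1/2) θ²` is differentiable with
`W' = −k_p max(0, f(e))² ‖e‖² − k_o θ²`. -/
theorem lyapunov_derivative
    (k_p k_o r : ℝ) (hkp : 0 < k_p) (hko : 0 < k_o) (hr : 0 < r)
    (f : EuclideanSpace ℝ (Fin 3) → ℝ) (hf : ∀ x, f x = ‖x‖ ^ 2 - r ^ 2)
    (e : ℝ → EuclideanSpace ℝ (Fin 3)) (θ : ℝ → ℝ)
    (he : ∀ t, HasDerivAt e ((-(k_p * max 0 (f (e t)))) • e t) t)
    (hθ : ∀ t, HasDerivAt θ (-(k_o * θ t)) t) :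
    ∀ t, HasDerivAt (fun s => (1/4) * max 0 (f (e s)) ^ 2 + (1/2) * θ s ^ 2)
      (-(k_p * max 0 (f (e t)) ^ 2 * ‖e t‖ ^ 2) - k_o * θ t ^ 2) t := by
  intro t
  set m := max 0 (f (e t)) with hm
  -- derivative of u s = f (e s)
  have hinner : HasDerivAt (fun s => (inner ℝ (e s) (e s) : ℝ))
      ((inner ℝ (e t) ((-(k_p * m)) • e t) : ℝ) + (inner ℝ ((-(k_p * m)) • e t) (e t) : ℝ)) t :=
    (he t).inner ℝ (he t)
  have hval : (inner ℝ (e t) ((-(k_p * m)) • e t) : ℝ) + (inner ℝ ((-(k_p * m)) • e t) (e t) : ℝ)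
      = -(2 * k_p * m * ‖e t‖ ^ 2) := by
    rw [inner_smul_left, inner_smul_right, real_inner_self_eq_norm_sq]
    simp only [starRingEnd_apply, star_trivial]
    ring
  have hu : HasDerivAt (fun s => f (e s)) (-(2 * k_p * m * ‖e t‖ ^ 2)) t := by
    have : HasDerivAt (fun s => (inner ℝ (e s) (e s) : ℝ) - r ^ 2)
        (-(2 * k_p * m * ‖e t‖ ^ 2)) t := by
      rw [← hval]; exact hinner.sub_const _
    refine this.congr_of_eventuallyEq ?_
    filter_upwards with s
    rw [hf, real_inner_self_eq_norm_sq]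
  -- derivative of max 0 u ^ 2
  have hW1 : HasDerivAt (fun s => max 0 (f (e s)) ^ 2)
      (2 * m * -(2 * k_p * m * ‖e t‖ ^ 2)) t := by
    have := (hasDerivAt_max_sq (f (e t))).comp t hu
    simpa [hm, mul_comm, Function.comp_def] using this
  have hW2 : HasDerivAt (fun s => θ s ^ 2) (2 * θ t * -(k_o * θ t)) t := by
    have := (hasDerivAt_pow 2 (θ t)).comp t (hθ t)
    simpa [Function.comp_def] using this
  have := ((hW1.const_mul (1/4 : ℝ)).add (hW2.const_mul (1/2 : ℝ)))
  refine this.congr_deriv ?_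
  ring
end

section
/- Let d₀ > 0, d_c ≥ 0, and p_o ∈ ℝ³. Let x ∈ ℝ³ be such that r̂ := ‖x − p_o‖ − d_c satisfies 0 < r̂ < d₀. Then the function G(y) := (1/2)·(log(d₀² / (d₀² − (d₀ − (‖y − p_o‖ − d_c))²)))² is differentiable at x, and its negative gradient equals −∇G(x) = (2 / (d₀² − (d₀ − r̂)²)) · log(d₀² / (d₀² − (d₀ − r̂)²)) · (d₀ − r̂) · (x − p_o)/‖x − p_o‖. -/
/-!
The potential is `G = V ∘ (‖· - p_o‖ - d_c)` with `V(r) = ½ log(d₀² / (d₀² - (d₀ - r)²))²`.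
Away from `p_o` the distance `‖· - p_o‖` has the unit vector `(x - p_o)/‖x - p_o‖` as its gradient,
so by the chain rule `∇G(x) = V'(r̂) (x - p_o)/‖x - p_o‖`, and `-V'(r̂)` is the scalar factor of the
claim. For `0 < r̂ < d₀` the denominator `d₀² - (d₀ - r̂)² = r̂ (2 d₀ - r̂)` is positive, so `V` is
differentiable at `r̂`.
-/

open Real InnerProductSpace

section Gradient

variable {F : Type*} [NormedAddCommGroup F] [InnerProductSpace ℝ F] [CompleteSpace F]

theorem HasDerivAt.comp_hasGradientAt {φ : ℝ → ℝ} {c : ℝ} {f : F → ℝ} {g : F} (x : F)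
    (hφ : HasDerivAt φ c (f x)) (hf : HasGradientAt f g x) :
    HasGradientAt (fun y => φ (f y)) (c • g) x := by
  rw [hasGradientAt_iff_hasFDerivAt] at hf ⊢
  simpa [Function.comp_def] using hφ.comp_hasFDerivAt x hf

theorem hasGradientAt_norm_sq (x : F) : HasGradientAt (fun y => ‖y‖ ^ 2) ((2 : ℝ) • x) x := by
  rw [hasGradientAt_iff_hasFDerivAt]
  refine (hasStrictFDerivAt_norm_sq x).hasFDerivAt.congr_fderiv ?_
  ext y
  simp

theorem hasGradientAt_norm {x : F} (hx : x ≠ 0) : HasGradientAt norm (‖x‖⁻¹ • x) x := by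
  have hsqrt : HasDerivAt sqrt (1 / (2 * ‖x‖)) (‖x‖ ^ 2) := by
    simpa [sqrt_sq (norm_nonneg x)] using hasDerivAt_sqrt (by positivity : ‖x‖ ^ 2 ≠ 0)
  convert hsqrt.comp_hasGradientAt x (hasGradientAt_norm_sq x) using 1
  · funext y
    exact (sqrt_sq (norm_nonneg y)).symm
  · rw [smul_smul]
    field_simp

theorem hasGradientAt_norm_sub {p x : F} (hx : x ≠ p) :
    HasGradientAt (fun y => ‖y - p‖) (‖x - p‖⁻¹ • (x - p)) x := by
  have h := hasGradientAt_norm (sub_ne_zero.mpr hx)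
  rw [hasGradientAt_iff_hasFDerivAt] at h ⊢
  exact (h.comp x ((hasFDerivAt_id x).sub_const p)).congr_fderiv (by ext; simp)

end Gradient

noncomputable def barrierPotential (d₀ r : ℝ) : ℝ :=
  (1 / 2) * log (d₀ ^ 2 / (d₀ ^ 2 - (d₀ - r) ^ 2)) ^ 2

theorem hasDerivAt_barrierPotential {d₀ r : ℝ} (hd₀ : d₀ ≠ 0) (hr : d₀ ^ 2 - (d₀ - r) ^ 2 ≠ 0) :
    HasDerivAt (barrierPotential d₀)
      (-(2 / (d₀ ^ 2 - (d₀ - r) ^ 2) * log (d₀ ^ 2 / (d₀ ^ 2 - (d₀ - r) ^ 2)) * (d₀ - r))) r := by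
  have hden : HasDerivAt (fun t => d₀ ^ 2 - (d₀ - t) ^ 2) (2 * (d₀ - r)) r := by
    refine ((((hasDerivAt_id r).const_sub d₀).pow 2).const_sub (d₀ ^ 2)).congr_deriv ?_
    simp
  have hlog := ((hasDerivAt_const r (d₀ ^ 2)).div hden hr).log (div_ne_zero (pow_ne_zero 2 hd₀) hr)
  refine ((hlog.pow 2).const_mul (1 / 2 : ℝ)).congr_deriv ?_
  simp only [Pi.div_apply]
  field_simp
  ring

theorem barrier_potential_gradient_general
    (d₀ d_c : ℝ) (hdc : 0 ≤ d_c)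
    (p_o x : EuclideanSpace ℝ (Fin 3))
    (hr1 : 0 < ‖x - p_o‖ - d_c) (hr2 : ‖x - p_o‖ - d_c < d₀)
    (G : EuclideanSpace ℝ (Fin 3) → ℝ)
    (hG : ∀ y, G y = (1/2) * (Real.log (d₀ ^ 2 /
        (d₀ ^ 2 - (d₀ - (‖y - p_o‖ - d_c)) ^ 2))) ^ 2) :
    DifferentiableAt ℝ G x ∧
    -gradient G x =
      ((2 / (d₀ ^ 2 - (d₀ - (‖x - p_o‖ - d_c)) ^ 2)) *
        Real.log (d₀ ^ 2 / (d₀ ^ 2 - (d₀ - (‖x - p_o‖ - d_c)) ^ 2)) *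
        (d₀ - (‖x - p_o‖ - d_c))) • ((‖x - p_o‖)⁻¹ • (x - p_o)) := by
  have hxp : x ≠ p_o := by
    rintro rfl
    simp only [sub_self, norm_zero] at hr1
    linarith
  have hd₀ : d₀ ≠ 0 := by linarith
  have hA : d₀ ^ 2 - (d₀ - (‖x - p_o‖ - d_c)) ^ 2 ≠ 0 := by
    have := mul_pos hr1 (by linarith : 0 < 2 * d₀ - (‖x - p_o‖ - d_c))
    exact (by linarith : 0 < d₀ ^ 2 - (d₀ - (‖x - p_o‖ - d_c)) ^ 2).ne'
  obtain rfl : G = fun y => barrierPotential d₀ (‖y - p_o‖ - d_c) := funext hG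
  have hgrad := ((hasDerivAt_barrierPotential hd₀ hA).comp_sub_const _ _).comp_hasGradientAt x
    (hasGradientAt_norm_sub hxp)
  refine ⟨hgrad.differentiableAt, ?_⟩
  rw [hgrad.gradient, ← neg_smul, neg_neg]

/-- Equations (9)–(11): the barrier potential `G(y) = V(‖y − p_o‖ − d_c)` is differentiable at
any point `x` with `0 < r̂ < d₀` (where `r̂ = ‖x − p_o‖ − d_c`) and its negative gradient is the
repulsive velocity `(2/(d₀² − (d₀ − r̂)²)) log(d₀²/(d₀² − (d₀ − r̂)²)) (d₀ − r̂) (x − p_o)/‖x − p_o‖`. -/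
theorem barrier_potential_gradient
    (d₀ d_c : ℝ) (hd₀ : 0 < d₀) (hdc : 0 ≤ d_c)
    (p_o x : EuclideanSpace ℝ (Fin 3))
    (hr1 : 0 < ‖x - p_o‖ - d_c) (hr2 : ‖x - p_o‖ - d_c < d₀)
    (G : EuclideanSpace ℝ (Fin 3) → ℝ)
    (hG : ∀ y, G y = (1/2) * (Real.log (d₀ ^ 2 /
        (d₀ ^ 2 - (d₀ - (‖y - p_o‖ - d_c)) ^ 2))) ^ 2) :
    DifferentiableAt ℝ G x ∧
    -gradient G x =
      ((2 / (d₀ ^ 2 - (d₀ - (‖x - p_o‖ - d_c)) ^ 2)) *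
        Real.log (d₀ ^ 2 / (d₀ ^ 2 - (d₀ - (‖x - p_o‖ - d_c)) ^ 2)) *
        (d₀ - (‖x - p_o‖ - d_c))) • ((‖x - p_o‖)⁻¹ • (x - p_o)) :=
  barrier_potential_gradient_general d₀ d_c hdc p_o x hr1 hr2 G hG
end
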